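/- arXiv:2507.12438 — 4 statements merged into one kernel-verified Lean document; each statement's English description precedes it below -/
import Mathlib

section
/- Let s, L ≥ 1 with L ≥ s + 1, let ω_1, …, ω_s ∈ ℝ be such that e^{−i ω_1}, …, e^{−i ω_s} are pairwise distinct, and let c_1, …, c_s ∈ ℂ be all nonzero. Define x_j = Σ_{k=1}^s c_k e^{−i ω_k j} for j ∈ ℕ and the L×L Hankel matrix W by W_{pq} = x_{p+q} for p, q ∈ {0, …, L−1}. Then the column space of W equals the linear span of the steering vectors a_L(ω_1), …, a_L(ω_s), and for every ω ∈ ℝ the steering vector a_L(ω) belongs to the column space of W if and only if e^{−i ω} = e^{−i ω_k} for some k ∈ {1, …, s}. -/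
open Matrix

/-- Steering vector `a_n(ω) ∈ ℂ^n`, `(a_n(ω))_j = e^{−iωj}`. -/
noncomputable def steer (n : ℕ) (ω : ℝ) : Fin n → ℂ :=
  fun j => Complex.exp (-Complex.I * ω * (j : ℕ))

/-!
The Hankel matrix factors as `W = V * diagonal c * Vᵀ`, where the columns of the `L × s`
matrix `V` are the steering vectors `a_L(ω_k)`, i.e. the power vectors of the nodes
`z_k = e^{-iω_k}`. Power vectors of `m ≤ L` distinct nodes are linearly independent
(a square Vandermonde matrix sits in their first `m` rows). With `m = s` this makes `Vᵀ`
surjective, and `diagonal c` is invertible, so the range of `W` is the column span of `V`.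
With `m = s + 1` it shows that `a_L(ω)` lies in that span only if `e^{-iω}` is one of the `z_k`.
-/

section PowerVectors

variable {K : Type*}

def powerVec [Monoid K] (L : ℕ) (z : K) : Fin L → K := fun j => z ^ (j : ℕ)

def powerMatrix [Monoid K] {s : ℕ} (L : ℕ) (z : Fin s → K) : Matrix (Fin L) (Fin s) K :=
  Matrix.of fun j k => powerVec L (z k) j

theorem linearIndependent_powerVec [CommRing K] [IsDomain K] {s L : ℕ} {z : Fin s → K}
    (hz : Function.Injective z) (hsL : s ≤ L) :
    LinearIndependent K fun k => powerVec L (z k) := by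
  rw [Fintype.linearIndependent_iff]
  intro g hg
  refine congrFun (eq_zero_of_forall_pow_sum_mul_pow_eq_zero hz fun i => ?_)
  simpa [powerVec] using congrFun hg (Fin.castLE hsL i)

theorem powerVec_mem_span_iff [Field K] {s L : ℕ} {z : Fin s → K}
    (hz : Function.Injective z) (hL : s + 1 ≤ L) (w : K) :
    powerVec L w ∈ Submodule.span K (Set.range fun k => powerVec L (z k)) ↔ w ∈ Set.range z := by
  constructor
  · intro hw
    by_contra hwz
    have hcons : Function.Injective (Fin.cons w z : Fin (s + 1) → K) :=
      Fin.cons_injective_of_injective hwz hz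
    have hindep := linearIndependent_powerVec hcons hL
    rw [← Function.comp_def, Fin.comp_cons, linearIndependent_finCons] at hindep
    exact hindep.2 hw
  · rintro ⟨k, rfl⟩
    exact Submodule.subset_span ⟨k, rfl⟩

theorem powerMatrix_mul_diagonal_mul_transpose [CommSemiring K] {s L : ℕ} (z c : Fin s → K) :
    powerMatrix L z * diagonal c * (powerMatrix L z)ᵀ
      = Matrix.of fun p q : Fin L => ∑ k, c k * z k ^ ((p : ℕ) + q) := by
  ext p q
  rw [mul_apply]
  simp only [mul_diagonal, transpose_apply, powerMatrix, powerVec, of_apply, pow_add]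
  exact Finset.sum_congr rfl fun k _ => by ring

theorem range_powerMatrix_mul_diagonal_mul_transpose [Field K] {s L : ℕ} {z c : Fin s → K}
    (hz : Function.Injective z) (hc : ∀ k, c k ≠ 0) (hsL : s ≤ L) :
    LinearMap.range (powerMatrix L z * diagonal c * (powerMatrix L z)ᵀ).mulVecLin
      = Submodule.span K (Set.range fun k => powerVec L (z k)) := by
  have hrank : ((powerMatrix L z)ᵀ).rank = s := by
    simpa using (linearIndependent_powerVec hz hsL).rank_matrix (M := (powerMatrix L z)ᵀ)
  have htop : LinearMap.range ((powerMatrix L z)ᵀ).mulVecLin = ⊤ :=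
    Submodule.eq_top_of_finrank_eq (by rw [← rank, hrank, Module.finrank_fin_fun])
  have hdiag : LinearMap.range (diagonal c).mulVecLin = ⊤ :=
    LinearMap.range_eq_top.2 <| mulVec_surjective_iff_isUnit.2 <|
      isUnit_diagonal.2 <| Pi.isUnit_iff.2 fun k => (hc k).isUnit
  rw [mulVecLin_mul, LinearMap.range_comp_of_range_eq_top _ htop, mulVecLin_mul,
    LinearMap.range_comp_of_range_eq_top _ hdiag, range_mulVecLin]
  rfl

end PowerVectors

theorem Complex.exp_mul_natCast (w : ℂ) (n : ℕ) : Complex.exp (w * n) = Complex.exp w ^ n := by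
  rw [mul_comm, Complex.exp_nat_mul]

theorem steer_eq_powerVec (L : ℕ) (θ : ℝ) :
    steer L θ = powerVec L (Complex.exp (-Complex.I * θ)) :=
  funext fun _ => Complex.exp_mul_natCast _ _

theorem music_exactness_general
    (s L : ℕ) (hL : s + 1 ≤ L)
    (ω : Fin s → ℝ)
    (hdist : Function.Injective fun k : Fin s => Complex.exp (-Complex.I * (ω k)))
    (c : Fin s → ℂ) (hc : ∀ k, c k ≠ 0)
    (x : ℕ → ℂ) (hx : ∀ j : ℕ, x j = ∑ k, c k * Complex.exp (-Complex.I * (ω k) * (j : ℕ)))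
    (W : Matrix (Fin L) (Fin L) ℂ) (hW : ∀ p q : Fin L, W p q = x ((p : ℕ) + (q : ℕ))) :
    LinearMap.range W.mulVecLin
        = Submodule.span ℂ (Set.range fun k : Fin s => steer L (ω k)) ∧
      ∀ ϑ : ℝ, steer L ϑ ∈ LinearMap.range W.mulVecLin ↔
        ∃ k : Fin s, Complex.exp (-Complex.I * ϑ) = Complex.exp (-Complex.I * (ω k)) := by
  set z : Fin s → ℂ := fun k => Complex.exp (-Complex.I * (ω k))
  have hW_factor : W = powerMatrix L z * diagonal c * (powerMatrix L z)ᵀ := by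
    rw [powerMatrix_mul_diagonal_mul_transpose]
    ext p q
    simp only [hW, hx, of_apply, Complex.exp_mul_natCast]
    rfl
  have hsteers : (fun k => steer L (ω k)) = fun k => powerVec L (z k) :=
    funext fun k => steer_eq_powerVec L (ω k)
  have hrange : LinearMap.range W.mulVecLin
      = Submodule.span ℂ (Set.range fun k : Fin s => steer L (ω k)) := by
    rw [hsteers, hW_factor]
    exact range_powerMatrix_mul_diagonal_mul_transpose hdist hc (by omega)
  refine ⟨hrange, fun ϑ => ?_⟩
  rw [hrange, hsteers, steer_eq_powerVec]
  exact (powerVec_mem_span_iff hdist hL _).trans (exists_congr fun _ => eq_comm)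

/-- **Exactness of MUSIC in the noiseless setting.**
For `L ≥ s + 1`, pairwise distinct nodes `e^{−i ω_k}` and nonzero amplitudes,
the column space of the Hankel matrix `W_{pq} = x_{p+q}` of the signal
`x_j = Σ_k c_k e^{−i ω_k j}` equals the span of the steering vectors
`a_L(ω_1), …, a_L(ω_s)`, and `a_L(ω)` lies in this column space iff
`e^{−iω} = e^{−iω_k}` for some `k`. -/
theorem music_exactness
    (s L : ℕ) (hs : 1 ≤ s) (hL : s + 1 ≤ L)
    (ω : Fin s → ℝ)
    (hdist : Function.Injective fun k : Fin s => Complex.exp (-Complex.I * (ω k)))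
    (c : Fin s → ℂ) (hc : ∀ k, c k ≠ 0)
    (x : ℕ → ℂ) (hx : ∀ j : ℕ, x j = ∑ k, c k * Complex.exp (-Complex.I * (ω k) * (j : ℕ)))
    (W : Matrix (Fin L) (Fin L) ℂ) (hW : ∀ p q : Fin L, W p q = x ((p : ℕ) + (q : ℕ))) :
    LinearMap.range W.mulVecLin
        = Submodule.span ℂ (Set.range fun k : Fin s => steer L (ω k)) ∧
      ∀ ϑ : ℝ, steer L ϑ ∈ LinearMap.range W.mulVecLin ↔
        ∃ k : Fin s, Complex.exp (-Complex.I * ϑ) = Complex.exp (-Complex.I * (ω k)) :=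
  music_exactness_general s L hL ω hdist c hc x hx W hW
end

section
/- Let V be a finite-dimensional complex inner product space, let A : V → V be a self-adjoint linear operator, let ψ ∈ V, let τ ∈ ℝ, and let L ≥ 1. Define the L×L Hankel matrix W by W_{pq} = ⟨ψ, exp(−i (p+q) τ A) ψ⟩ for p, q ∈ {0, …, L−1}. Then rank(W) is at most the number of distinct eigenvalues E of A for which the orthogonal projection of ψ onto the eigenspace of E is nonzero. -/
/-!
Write `P_μ` for the orthogonal projection onto the `μ`-eigenspace of `A`. Since `ψ = ∑_μ P_μ ψ`,
every propagated state `e^{-ikτA} ψ = ∑_μ e^{-ikτμ} P_μ ψ` lies in the span `K` of the nonzero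
vectors `P_μ ψ`. As `e^{-i(p+q)τA} = e^{-ipτA} e^{-iqτA}`, the `q`-th column of `W` is the image of
`e^{-iqτA} ψ ∈ K` under the linear map `v ↦ (⟪ψ, e^{-ipτA} v⟫)_p`, so `rank W ≤ dim K`.
-/

open Matrix Module Module.End Submodule
open scoped InnerProductSpace

theorem exp_apply_of_apply_eq_smul {V : Type*} [NormedAddCommGroup V] [NormedSpace ℂ V]
    [CompleteSpace V] {B : V →L[ℂ] V} {μ : ℂ} {x : V} (hx : B x = μ • x) :
    NormedSpace.exp B x = Complex.exp μ • x := by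
  have hpow : ∀ n : ℕ, (B ^ n) x = μ ^ n • x := by
    intro n
    induction n with
    | zero => simp
    | succ n ih =>
      rw [pow_succ, ContinuousLinearMap.mul_def, ContinuousLinearMap.comp_apply, hx, map_smul, ih,
        smul_smul, ← pow_succ']
  have hB := (NormedSpace.exp_series_hasSum_exp' (𝕂 := ℂ) B).mapL
    (ContinuousLinearMap.apply ℂ V x)
  have hμ := (NormedSpace.exp_series_hasSum_exp' (𝕂 := ℂ) μ).smul_const x
  rw [Complex.exp_eq_exp_ℂ]
  refine hB.unique ?_
  simpa [hpow, smul_smul] using hμ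

theorem Matrix.rank_le_finrank_of_apply_eq {m n R M : Type*} [Fintype n] [Field R]
    [AddCommGroup M] [Module R M] (A : Matrix m n R) (f : m → M →ₗ[R] R) (w : n → M)
    (K : Submodule R M) [FiniteDimensional R K] (hw : ∀ j, w j ∈ K)
    (hA : ∀ i j, A i j = f i (w j)) : A.rank ≤ finrank R K := by
  let g : (n → R) →ₗ[R] K := Fintype.linearCombination R fun j => ⟨w j, hw j⟩
  have hfactor : A.mulVecLin = (LinearMap.pi f ∘ₗ K.subtype) ∘ₗ g := by
    ext x i
    simp [g, mulVec, dotProduct, Fintype.linearCombination_apply, hA, mul_comm]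
  rw [Matrix.rank, hfactor, LinearMap.range_comp]
  exact (finrank_map_le _ _).trans (Submodule.finrank_le _)

theorem finrank_span_le_ncard {R M : Type*} [DivisionRing R] [AddCommGroup M] [Module R M]
    {s : Set M} (hs : s.Finite) : finrank R (span R s) ≤ s.ncard := by
  have := hs.fintype
  rw [Set.ncard_eq_toFinset_card']
  exact finrank_span_le_card s

section Spectral

variable {𝕜 V : Type*} [RCLike 𝕜] [NormedAddCommGroup V] [InnerProductSpace 𝕜 V]
  [FiniteDimensional 𝕜 V]

theorem Module.End.finite_setOf_orthogonalProjectionOnto_eigenspace_ne_zero (T : V →ₗ[𝕜] V)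
    (x : V) : {μ | (eigenspace T μ).orthogonalProjectionOnto x ≠ 0}.Finite :=
  (finite_hasEigenvalue T).subset fun μ hμ => hasEigenvalue_iff.mpr fun hbot =>
    hμ (Subtype.ext ((mem_bot 𝕜).mp (hbot ▸ ((eigenspace T μ).orthogonalProjectionOnto x).2)))

variable {T : V →ₗ[𝕜] V}

theorem LinearMap.IsSymmetric.sum_starProjection_eigenspace (hT : T.IsSymmetric) (x : V) :
    ∑ μ : Eigenvalues T, (eigenspace T μ).starProjection x = x :=
  hT.orthogonalFamily_eigenspaces'.sum_projection_of_mem_iSup x <| by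
    rw [orthogonal_eq_bot_iff.mp hT.orthogonalComplement_iSup_eigenspaces_eq_bot']
    exact mem_top

theorem LinearMap.IsSymmetric.apply_mem_span_orthogonalProjectionOnto_eigenspace
    (hT : T.IsSymmetric) {F : V →ₗ[𝕜] V} (c : 𝕜 → 𝕜)
    (hF : ∀ μ, ∀ v ∈ eigenspace T μ, F v = c μ • v) (x : V) :
    F x ∈ span 𝕜 ((fun μ => ((eigenspace T μ).orthogonalProjectionOnto x : V)) ''
      {μ | (eigenspace T μ).orthogonalProjectionOnto x ≠ 0}) := by
  have hsum : F x = ∑ μ : Eigenvalues T,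
      c μ • ((eigenspace T μ).orthogonalProjectionOnto x : V) := by
    conv_lhs => rw [← hT.sum_starProjection_eigenspace x]
    simp only [map_sum, starProjection_apply, hF _ _ (coe_mem _)]
  rw [hsum]
  refine sum_mem fun μ _ => smul_mem _ _ ?_
  by_cases h : (eigenspace T μ).orthogonalProjectionOnto x = 0
  · simp [h]
  · exact subset_span ⟨μ, h, rfl⟩

end Spectral

theorem autocorrelation_hankel_rank_le_general
    (V : Type*) [NormedAddCommGroup V] [InnerProductSpace ℂ V]
    [FiniteDimensional ℂ V]
    (A : V →L[ℂ] V) (hA : ∀ φ χ : V, ⟪A φ, χ⟫_ℂ = ⟪φ, A χ⟫_ℂ)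
    (ψ : V) (τ : ℝ) (L : ℕ)
    (W : Matrix (Fin L) (Fin L) ℂ)
    (hW : ∀ p q : Fin L,
      W p q = ⟪ψ, NormedSpace.exp
        ((-Complex.I * ((((p : ℕ) + (q : ℕ) : ℕ) : ℂ)) * (τ : ℂ)) • A) ψ⟫_ℂ) :
    W.rank ≤
      {μ : ℂ |
        Submodule.orthogonalProjectionOnto (Module.End.eigenspace (A : V →ₗ[ℂ] V) μ) ψ ≠ 0}.ncard := by
  set S := {μ : ℂ | (eigenspace (A : V →ₗ[ℂ] V) μ).orthogonalProjectionOnto ψ ≠ 0}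
  set K := span ℂ ((fun μ => ((eigenspace (A : V →ₗ[ℂ] V) μ).orthogonalProjectionOnto ψ : V)) '' S)
  have hS : S.Finite := finite_setOf_orthogonalProjectionOnto_eigenspace_ne_zero _ ψ
  let U : ℕ → V →L[ℂ] V := fun k => NormedSpace.exp ((-Complex.I * (k : ℂ) * τ) • A)
  have hU_add (p q : ℕ) : U (p + q) = U p * U q := by
    rw [← NormedSpace.exp_add_of_commute_of_mem_ball (𝕂 := ℂ)
      (((Commute.refl A).smul_left _).smul_right _) (by simp [NormedSpace.expSeries_radius_eq_top])
      (by simp [NormedSpace.expSeries_radius_eq_top]), ← add_smul]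
    show NormedSpace.exp _ = _
    congr 2
    push_cast
    ring
  have hU_mem (k : ℕ) : U k ψ ∈ K :=
    LinearMap.IsSymmetric.apply_mem_span_orthogonalProjectionOnto_eigenspace hA
      (F := (U k : V →ₗ[ℂ] V)) (fun μ => Complex.exp ((-Complex.I * k * τ) * μ))
      (fun μ v hv => exp_apply_of_apply_eq_smul <| by
        rw [_root_.smul_apply, ← ContinuousLinearMap.coe_coe,
          mem_eigenspace_iff.mp hv, smul_smul]) ψ
  calc W.rank ≤ finrank ℂ K :=
        W.rank_le_finrank_of_apply_eq (fun p => innerₛₗ ℂ ψ ∘ₗ (U p : V →ₗ[ℂ] V))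
          (fun q => U q ψ) K (fun q => hU_mem q) fun p q => by
            rw [hW]
            exact congrArg (fun T => ⟪ψ, T ψ⟫_ℂ) (hU_add p q)
    _ ≤ _ := finrank_span_le_ncard (hS.image _)
    _ ≤ S.ncard := Set.ncard_image_le hS

/-- **Rank bound on the Hankel matrix of autocorrelation samples.**
For a self-adjoint operator `A` on a finite-dimensional complex inner product space,
`ψ ∈ V`, `τ ∈ ℝ` and `L ≥ 1`, the rank of the Hankel matrix
`W_{pq} = ⟨ψ, e^{−i(p+q)τA} ψ⟩` is at most the number of distinct eigenvalues `E`
of `A` whose eigenspace has nonzero orthogonal projection of `ψ`. -/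
theorem autocorrelation_hankel_rank_le
    (V : Type*) [NormedAddCommGroup V] [InnerProductSpace ℂ V]
    [FiniteDimensional ℂ V] [Nontrivial V]
    (A : V →L[ℂ] V) (hA : ∀ φ χ : V, ⟪A φ, χ⟫_ℂ = ⟪φ, A χ⟫_ℂ)
    (ψ : V) (τ : ℝ) (L : ℕ) (hL : 1 ≤ L)
    (W : Matrix (Fin L) (Fin L) ℂ)
    (hW : ∀ p q : Fin L,
      W p q = ⟪ψ, NormedSpace.exp
        ((-Complex.I * ((((p : ℕ) + (q : ℕ) : ℕ) : ℂ)) * (τ : ℂ)) • A) ψ⟫_ℂ) :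
    W.rank ≤
      {μ : ℂ |
        Submodule.orthogonalProjectionOnto (Module.End.eigenspace (A : V →ₗ[ℂ] V) μ) ψ ≠ 0}.ncard :=
  autocorrelation_hankel_rank_le_general V A hA ψ τ L W hW
end

section
/- (Carathéodory–Fejér / Vandermonde decomposition) Let n ≥ 2 and let T be an n×n complex Hermitian positive semidefinite Toeplitz matrix (i.e. T_{jk} depends only on j−k, Tᴴ = T, and v̄ᵀ T v ≥ 0 for all v ∈ ℂ^n). Let r = rank(T) and assume r ≤ n − 1. Then there exist pairwise distinct ω_1, …, ω_r ∈ [0, 2π) and strictly positive reals p_1, …, p_r such that T = Σ_{k=1}^r p_k · a_n(ω_k) · a_n(ω_k)ᴴ. -/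
open Matrix
open scoped ComplexOrder

/-!
Identify `ℂⁿ` with the polynomials of degree `< n` through their coefficients. For a Toeplitz
matrix `T` the form `(p, q) ↦ ⟨q, T p⟩` is invariant under `(p, q) ↦ (X p, X q)` as long as the
degrees stay below `n - 1`; together with `T ⪰ 0` this makes the kernel of `T` stable under
multiplication by `X`, so it consists of the multiples of a monic kernel polynomial `c` of least
degree. The same invariance forces the roots of `c` to be simple and to lie on the unit circle.
Hence `ker T = ker V` for the Vandermonde matrix `V` of these `r = deg c` roots, which gives
`rank T = r` and `T = Vᴴ Q V` with `Q ⪰ 0`. Comparing two overlapping `r × r` blocks of `T`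
shows `Q = D̄ Q D` for `D = diag(roots)`, so `Q` is diagonal, and its diagonal is positive
because `rank T = r`. Writing the roots as `e^{iω_k}` yields the decomposition.
-/

open Polynomial

theorem Polynomial.dvd_iff_forall_isRoot_of_nodup_roots {k : Type*} [Field k] [IsAlgClosed k]
    {c p : k[X]} (hc : c ≠ 0) (hnd : c.roots.Nodup) : c ∣ p ↔ ∀ z, c.IsRoot z → p.IsRoot z := by
  rcases eq_or_ne p 0 with rfl | hp
  · simp
  rw [IsAlgClosed.dvd_iff_roots_le_roots hc hp, Multiset.le_iff_subset hnd]
  simp [Multiset.subset_iff, mem_roots hc, mem_roots hp]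

theorem Submodule.exists_monic_mem_forall_natDegree_lt {K : Type*} [Field K]
    (S : Submodule K K[X]) {p : K[X]} (hpS : p ∈ S) (hp : p ≠ 0) :
    ∃ c ∈ S, c.Monic ∧ c.natDegree ≤ p.natDegree ∧
      ∀ q ∈ S, q.natDegree < c.natDegree → q = 0 := by
  classical
  have hex : ∃ d, ∃ q ∈ S, q ≠ 0 ∧ q.natDegree = d := ⟨_, p, hpS, hp, rfl⟩
  obtain ⟨q, hqS, hq0, hqd⟩ := Nat.find_spec hex
  have hlc : q.leadingCoeff ≠ 0 := leadingCoeff_ne_zero.mpr hq0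
  refine ⟨C q.leadingCoeff⁻¹ * q, ?_, monic_C_mul_of_mul_leadingCoeff_eq_one (inv_mul_cancel₀ hlc),
    ?_, fun q' hq'S hq' => ?_⟩
  · rw [← smul_eq_C_mul]
    exact S.smul_mem _ hqS
  · rw [natDegree_C_mul (inv_ne_zero hlc), hqd]
    exact Nat.find_min' hex ⟨p, hpS, hp, rfl⟩
  · rw [natDegree_C_mul (inv_ne_zero hlc), hqd] at hq'
    by_contra hq'0
    exact Nat.find_min hex hq' ⟨q', hq'S, hq'0, rfl⟩

@[simp]
theorem Polynomial.toFn_apply {R : Type*} [Semiring R] (n : ℕ) (p : R[X]) (i : Fin n) :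
    toFn n p i = p.coeff i := rfl

namespace Matrix

variable {n : ℕ}

def IsToeplitz {R : Type*} (T : Matrix (Fin n) (Fin n) R) : Prop :=
  ∀ j k j' k' : Fin n,
    ((j : ℕ) : ℤ) - ((k : ℕ) : ℤ) = ((j' : ℕ) : ℤ) - ((k' : ℕ) : ℤ) → T j k = T j' k'

theorem IsToeplitz.apply_succ_succ {R : Type*} {m : ℕ} {T : Matrix (Fin (m + 1)) (Fin (m + 1)) R}
    (hT : T.IsToeplitz) (j k : Fin m) : T j.succ k.succ = T j.castSucc k.castSucc :=
  hT _ _ _ _ (by simp)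

section PolyKer

variable {R : Type*} [CommSemiring R] {T : Matrix (Fin n) (Fin n) R}

/-- `toFn n` truncates, so only the elements of degree `< n` correspond to kernel vectors. -/
noncomputable def polyKer (T : Matrix (Fin n) (Fin n) R) : Submodule R R[X] :=
  LinearMap.ker (T.mulVecLin ∘ₗ toFn n)

theorem mem_polyKer {p : R[X]} : p ∈ T.polyKer ↔ T *ᵥ toFn n p = 0 := Iff.rfl

end PolyKer

section MinimalKerPoly

variable {K : Type*} [Field K] {T : Matrix (Fin n) (Fin n) K}

structure IsMinimalKerPoly (T : Matrix (Fin n) (Fin n) K) (c : K[X]) : Prop where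
  monic : c.Monic
  mem : c ∈ T.polyKer
  natDegree_lt : c.natDegree < n
  eq_zero_of_mem_of_natDegree_lt : ∀ q ∈ T.polyKer, q.natDegree < c.natDegree → q = 0

theorem exists_isMinimalKerPoly {x : Fin n → K} (hx : T *ᵥ x = 0) (hx0 : x ≠ 0) :
    ∃ c, T.IsMinimalKerPoly c := by
  classical
  have hn : 1 ≤ n := Nat.one_le_iff_ne_zero.mpr fun h => hx0 (funext fun i => (h ▸ i).elim0)
  obtain ⟨c, hcK, hc, hcx, hmin⟩ := T.polyKer.exists_monic_mem_forall_natDegree_lt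
    (p := ofFn n x) (by rwa [mem_polyKer, toFn_comp_ofFn_eq_id])
    (by simpa using (injective_ofFn n).ne hx0)
  exact ⟨c, ⟨hc, hcK, hcx.trans_lt (ofFn_natDegree_lt hn x), hmin⟩⟩

end MinimalKerPoly

section PolyForm

variable {R : Type*} [CommRing R] [StarRing R] {T : Matrix (Fin n) (Fin n) R}

noncomputable def polyForm (T : Matrix (Fin n) (Fin n) R) (p q : R[X]) : R :=
  star (toFn n q) ⬝ᵥ T *ᵥ toFn n p

theorem polyForm_eq_zero_of_mem_polyKer {p : R[X]} (hp : p ∈ T.polyKer) (q : R[X]) :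
    polyForm T p q = 0 := by
  rw [polyForm, mem_polyKer.mp hp, dotProduct_zero]

theorem IsToeplitz.polyForm_X_mul_X_mul (hT : T.IsToeplitz) {p q : R[X]}
    (hp : p.natDegree + 1 < n) (hq : q.natDegree + 1 < n) :
    polyForm T (X * p) (X * q) = polyForm T p q := by
  obtain ⟨m, rfl⟩ : ∃ m, n = m + 1 := ⟨n - 1, by omega⟩
  have hpm : p.coeff m = 0 := coeff_eq_zero_of_natDegree_lt (by omega)
  have hqm : q.coeff m = 0 := coeff_eq_zero_of_natDegree_lt (by omega)
  simp only [polyForm, dotProduct, mulVec, Finset.mul_sum]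
  trans ∑ k : Fin m, ∑ j : Fin m, star (q.coeff k) * (T k.castSucc j.castSucc * p.coeff j)
  · simp [Fin.sum_univ_succ, hT.apply_succ_succ]
  · simp [Fin.sum_univ_castSucc, hpm, hqm]

theorem polyForm_X_sub_C_mul_left (z : R) (g q : R[X]) :
    polyForm T ((X - C z) * g) q = polyForm T (X * g) q - z * polyForm T g q := by
  simp [polyForm, sub_mul, ← smul_eq_C_mul, mulVec_sub, mulVec_smul, dotProduct_sub]

theorem polyForm_X_sub_C_mul_right (z : R) (p h : R[X]) :
    polyForm T p ((X - C z) * h) = polyForm T p (X * h) - star z * polyForm T p h := by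
  simp [polyForm, sub_mul, ← smul_eq_C_mul, star_smul, sub_dotProduct]

theorem polyForm_X_mul_of_X_sub_C_mul_mem_polyKer {z : R} {g : R[X]}
    (h : (X - C z) * g ∈ T.polyKer) (q : R[X]) :
    polyForm T (X * g) q = z * polyForm T g q := by
  have := polyForm_eq_zero_of_mem_polyKer h q
  rwa [polyForm_X_sub_C_mul_left, sub_eq_zero] at this

theorem IsHermitian.polyForm_swap (hT : T.IsHermitian) (p q : R[X]) :
    polyForm T q p = star (polyForm T p q) := by
  rw [polyForm, polyForm, star_dotProduct, star_mulVec, hT.eq, dotProduct_mulVec]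

end PolyForm

section PosSemidef

variable {𝕜 : Type*} [RCLike 𝕜] {T : Matrix (Fin n) (Fin n) 𝕜}

theorem PosSemidef.polyForm_self_eq_zero_iff (hT : T.PosSemidef) {p : 𝕜[X]} :
    polyForm T p p = 0 ↔ p ∈ T.polyKer :=
  hT.dotProduct_mulVec_zero_iff _

theorem X_mul_mem_polyKer (hT : T.IsToeplitz) (hPSD : T.PosSemidef) {p : 𝕜[X]}
    (hp : p ∈ T.polyKer) (hdeg : p.natDegree + 1 < n) : X * p ∈ T.polyKer := by
  rw [← hPSD.polyForm_self_eq_zero_iff, hT.polyForm_X_mul_X_mul hdeg hdeg]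
  exact polyForm_eq_zero_of_mem_polyKer hp p

theorem X_pow_mul_mem_polyKer (hT : T.IsToeplitz) (hPSD : T.PosSemidef) {p : 𝕜[X]}
    (hp : p ∈ T.polyKer) {m : ℕ} (hdeg : p.natDegree + m < n) : X ^ m * p ∈ T.polyKer := by
  induction m with
  | zero => simpa using hp
  | succ m ih =>
    rw [pow_succ', mul_assoc]
    refine X_mul_mem_polyKer hT hPSD (ih (by omega)) ?_
    have := natDegree_mul_le (p := X ^ m) (q := p)
    have := natDegree_X_pow_le (R := 𝕜) m
    omega

theorem mul_mem_polyKer (hT : T.IsToeplitz) (hPSD : T.PosSemidef) {p : 𝕜[X]}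
    (hp : p ∈ T.polyKer) {q : 𝕜[X]} (hdeg : q.natDegree + p.natDegree < n) :
    q * p ∈ T.polyKer := by
  rw [q.as_sum_range_C_mul_X_pow, Finset.sum_mul]
  refine Submodule.sum_mem _ fun i hi => ?_
  rw [mul_assoc, ← smul_eq_C_mul]
  exact Submodule.smul_mem _ _
    (X_pow_mul_mem_polyKer hT hPSD hp (by rw [Finset.mem_range] at hi; omega))

namespace IsMinimalKerPoly

variable {c : 𝕜[X]}

theorem mem_polyKer_iff_dvd (hc : T.IsMinimalKerPoly c) (hT : T.IsToeplitz)
    (hPSD : T.PosSemidef) {p : 𝕜[X]} (hpn : p.natDegree < n) : p ∈ T.polyKer ↔ c ∣ p := by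
  have hcn := hc.natDegree_lt
  constructor
  · intro hp
    rw [← modByMonic_eq_zero_iff_dvd hc.monic]
    by_contra h
    refine h (hc.eq_zero_of_mem_of_natDegree_lt _ ?_
      (natDegree_lt_natDegree h (degree_modByMonic_lt p hc.monic)))
    rw [modByMonic_eq_sub_mul_div, mul_comm]
    refine T.polyKer.sub_mem hp (mul_mem_polyKer hT hPSD hc.mem ?_)
    rw [natDegree_divByMonic p hc.monic]
    omega
  · rintro ⟨q, rfl⟩
    rw [mul_comm]
    refine mul_mem_polyKer hT hPSD hc.mem ?_
    rcases eq_or_ne q 0 with rfl | hq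
    · simpa using hcn
    · rwa [natDegree_mul hc.monic.ne_zero hq, add_comm] at hpn

theorem norm_eq_one_of_isRoot (hc : T.IsMinimalKerPoly c) (hT : T.IsToeplitz)
    (hPSD : T.PosSemidef) {z : 𝕜} (hz : c.IsRoot z) : ‖z‖ = 1 := by
  obtain ⟨g, rfl⟩ := dvd_iff_isRoot.mpr hz
  have hg0 : g ≠ 0 := right_ne_zero_of_mul hc.monic.ne_zero
  have hdeg := hc.natDegree_lt
  have hmin := hc.eq_zero_of_mem_of_natDegree_lt
  rw [natDegree_mul (X_sub_C_ne_zero z) hg0, natDegree_X_sub_C] at hdeg hmin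
  have hgg : polyForm T g g ≠ 0 := fun h =>
    hg0 (hmin g (hPSD.polyForm_self_eq_zero_iff.mp h) (by omega))
  have hX := polyForm_X_mul_of_X_sub_C_mul_mem_polyKer hc.mem
  have hreal : star (polyForm T g g) = polyForm T g g := (hPSD.1.polyForm_swap g g).symm
  have key : polyForm T g g = (z * star z) * polyForm T g g := calc
    polyForm T g g = polyForm T (X * g) (X * g) :=
      (hT.polyForm_X_mul_X_mul (by omega) (by omega)).symm
    _ = z * star (polyForm T (X * g) g) := by rw [hX, hPSD.1.polyForm_swap]
    _ = (z * star z) * polyForm T g g := by rw [hX, star_mul', hreal]; ring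
  have hz1 : z * star z = 1 := (mul_eq_right₀ hgg).mp key.symm
  rw [RCLike.star_def, RCLike.mul_conj] at hz1
  exact (pow_eq_one_iff_of_nonneg (norm_nonneg z) two_ne_zero).mp (by exact_mod_cast hz1)

theorem not_X_sub_C_sq_dvd (hc : T.IsMinimalKerPoly c) (hT : T.IsToeplitz)
    (hPSD : T.PosSemidef) (z : 𝕜) : ¬ (X - C z) ^ 2 ∣ c := by
  rintro ⟨h, hch⟩
  have hz : ‖z‖ = 1 := hc.norm_eq_one_of_isRoot hT hPSD (by simp [hch])
  have hc0 := hc.monic.ne_zero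
  rw [hch] at hc0
  obtain ⟨u, hu⟩ : ∃ u, u = (X - C z) * h := ⟨_, rfl⟩
  have hcu : c = (X - C z) * u := by rw [hch, hu]; ring
  have hu0 : u ≠ 0 := hu ▸ mul_ne_zero (X_sub_C_ne_zero z) (right_ne_zero_of_mul hc0)
  have hdeg : u.natDegree = h.natDegree + 1 := by
    rw [hu, natDegree_mul (X_sub_C_ne_zero z) (right_ne_zero_of_mul hc0), natDegree_X_sub_C,
      add_comm]
  have hcn := hc.natDegree_lt
  rw [hcu, natDegree_mul (X_sub_C_ne_zero z) hu0, natDegree_X_sub_C] at hcn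
  have hzz : star z * z = 1 := by rw [RCLike.star_def, RCLike.conj_mul, hz]; norm_num
  have huu : polyForm T u u = 0 := calc
    polyForm T u u = polyForm T u (X * h) - star z * polyForm T (X * u) (X * h) := by
      rw [hT.polyForm_X_mul_X_mul (by omega) (by omega), ← polyForm_X_sub_C_mul_right, hu]
    _ = (1 - star z * z) * polyForm T u (X * h) := by
      rw [polyForm_X_mul_of_X_sub_C_mul_mem_polyKer (hcu ▸ hc.mem)]; ring
    _ = 0 := by rw [hzz, sub_self, zero_mul]
  refine hu0 (hc.eq_zero_of_mem_of_natDegree_lt u (hPSD.polyForm_self_eq_zero_iff.mp huu) ?_)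
  rw [hcu, natDegree_mul (X_sub_C_ne_zero z) hu0, natDegree_X_sub_C]
  omega

theorem roots_nodup (hc : T.IsMinimalKerPoly c) (hT : T.IsToeplitz) (hPSD : T.PosSemidef) :
    c.roots.Nodup := by
  classical
  refine Multiset.nodup_iff_count_le_one.mpr fun z => ?_
  rw [count_roots]
  by_contra! h
  exact hc.not_X_sub_C_sq_dvd hT hPSD z ((le_rootMultiplicity_iff hc.monic.ne_zero).mp h)

end IsMinimalKerPoly

end PosSemidef

section Vandermonde

variable {K : Type*} [Field K] {d : ℕ} {v : Fin d → K}

@[simp]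
theorem rectVandermonde_one_apply (v : Fin d → K) (a : Fin d) (j : Fin n) :
    rectVandermonde v 1 n a j = v a ^ (j : ℕ) := by
  simp [rectVandermonde_apply]

theorem rectVandermonde_one_mulVec [DecidableEq K] (v : Fin d → K) (x : Fin n → K) (a : Fin d) :
    (rectVandermonde v 1 n *ᵥ x) a = (ofFn n x).eval (v a) := by
  simp [mulVec, dotProduct, ofFn_eq_sum_monomial, eval_finsetSum, mul_comm]

theorem rectVandermonde_one_mulVec_surjective [DecidableEq K] (hv : Function.Injective v)
    (hdn : d ≤ n) : Function.Surjective (rectVandermonde v 1 n).mulVec := by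
  intro y
  have hdeg := Lagrange.degree_interpolate_lt y (s := Finset.univ) hv.injOn
  refine ⟨toFn n (Lagrange.interpolate Finset.univ v y), funext fun a => ?_⟩
  rw [rectVandermonde_one_mulVec, ofFn_comp_toFn_eq_id_of_natDegree_lt,
    Lagrange.eval_interpolate_at_node _ hv.injOn (Finset.mem_univ a)]
  rcases eq_or_ne (Lagrange.interpolate Finset.univ v y) 0 with h | h
  · rw [h, natDegree_zero]
    exact a.pos.trans_le hdn
  · rw [natDegree_lt_iff_degree_lt h]
    exact hdeg.trans_le (by simpa using hdn)

theorem rank_rectVandermonde_one (hv : Function.Injective v) (hdn : d ≤ n) :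
    (rectVandermonde v 1 n).rank = d := by
  classical
  rw [rank, LinearMap.range_eq_top.mpr (rectVandermonde_one_mulVec_surjective hv hdn), finrank_top,
    Module.finrank_fin_fun]

end Vandermonde

theorem exists_ker_mulVecLin_eq_ker_rectVandermonde {T : Matrix (Fin n) (Fin n) ℂ}
    (hT : T.IsToeplitz) (hPSD : T.PosSemidef) (hker : LinearMap.ker T.mulVecLin ≠ ⊥) :
    ∃ (d : ℕ) (v : Fin d → ℂ), Function.Injective v ∧ (∀ a, ‖v a‖ = 1) ∧ d < n ∧
      LinearMap.ker T.mulVecLin = LinearMap.ker (rectVandermonde v 1 n).mulVecLin := by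
  obtain ⟨x, hx, hx0⟩ := (Submodule.ne_bot_iff _).mp hker
  obtain ⟨c, hc⟩ := exists_isMinimalKerPoly hx hx0
  have hn : 0 < n := Nat.zero_lt_of_lt hc.natDegree_lt
  let s := c.roots.toFinset
  have hs : ∀ z, z ∈ s ↔ c.IsRoot z := by simp [s, mem_roots hc.monic.ne_zero]
  refine ⟨s.card, fun a => s.equivFin.symm a, Subtype.val_injective.comp s.equivFin.symm.injective,
    fun a => hc.norm_eq_one_of_isRoot hT hPSD ((hs _).mp (s.equivFin.symm a).2), ?_, ?_⟩
  · calc s.card ≤ Multiset.card c.roots := Multiset.toFinset_card_le _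
      _ ≤ c.natDegree := card_roots' c
      _ < n := hc.natDegree_lt
  · ext y
    have hy : T *ᵥ y = 0 ↔ ofFn n y ∈ T.polyKer := by rw [mem_polyKer, toFn_comp_ofFn_eq_id]
    simp only [LinearMap.mem_ker, mulVecLin_apply]
    rw [hy, hc.mem_polyKer_iff_dvd hT hPSD (ofFn_natDegree_lt hn y),
      dvd_iff_forall_isRoot_of_nodup_roots hc.monic.ne_zero (hc.roots_nodup hT hPSD), funext_iff]
    simp only [Pi.zero_apply, rectVandermonde_one_mulVec]
    rw [s.equivFin.symm.forall_congr_left]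
    simp [hs]

theorem rank_eq_rank_of_ker_eq {K : Type*} [Field K] {l m n : Type*} [Fintype n]
    {A : Matrix l n K} {B : Matrix m n K}
    (h : LinearMap.ker A.mulVecLin = LinearMap.ker B.mulVecLin) : A.rank = B.rank := by
  have hA := LinearMap.finrank_range_add_finrank_ker A.mulVecLin
  have hB := LinearMap.finrank_range_add_finrank_ker B.mulVecLin
  rw [h] at hA
  rw [rank, rank]
  omega

theorem eq_conjTranspose_mul_mul_of_ker_le {K : Type*} [Field K] [StarRing K] {m n : Type*}
    [Fintype m] [Fintype n] [DecidableEq m] [DecidableEq n] {T : Matrix n n K}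
    (hT : T.IsHermitian) {V : Matrix m n K} {R : Matrix n m K} (hVR : V * R = 1)
    (hker : LinearMap.ker V.mulVecLin ≤ LinearMap.ker T.mulVecLin) :
    T = Vᴴ * (Rᴴ * T * R) * V := by
  have hTRV : T * R * V = T := by
    refine ext_of_mulVec_single fun i => ?_
    have hV : V *ᵥ (Pi.single i 1 - (R * V) *ᵥ Pi.single i 1) = 0 := by
      rw [mulVec_sub, mulVec_mulVec, ← Matrix.mul_assoc, hVR, Matrix.one_mul, sub_self]
    have := hker hV
    simp only [LinearMap.mem_ker, mulVecLin_apply, mulVec_sub, mulVec_mulVec, sub_eq_zero] at this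
    rw [Matrix.mul_assoc, this]
  have hVRT : Vᴴ * Rᴴ * T = T := by
    simpa [hT.eq, Matrix.mul_assoc] using congrArg conjTranspose hTRV
  rw [← Matrix.mul_assoc, ← Matrix.mul_assoc, hVRT, hTRV]

theorem conjTranspose_mul_mul_submatrix {R : Type*} [CommSemiring R] [StarRing R] {l m n : Type*}
    [Fintype m] [Fintype n] (V : Matrix m n R) (Q : Matrix m m R) (ι : l → n) :
    (Vᴴ * Q * V).submatrix ι ι = (V.submatrix id ι)ᴴ * Q * V.submatrix id ι := by
  ext
  simp [mul_apply]

/-- The leading `d × d` block of `T` is `Wᴴ Q W` for the square Vandermonde matrix `W`, the block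
one step down the diagonal is `(D W)ᴴ Q (D W)` with `D = diagonal v`; they agree, so
`Q = D̄ Q D`. -/
theorem IsToeplitz.isDiag_of_eq_conjTranspose_mul_mul {K : Type*} [Field K] [StarRing K]
    {T : Matrix (Fin n) (Fin n) K} (hT : T.IsToeplitz) {d : ℕ} {v : Fin d → K}
    (hv : Function.Injective v) (hv1 : ∀ a, star (v a) * v a = 1) (hdn : d < n)
    {Q : Matrix (Fin d) (Fin d) K}
    (hTQ : T = (rectVandermonde v 1 n)ᴴ * Q * rectVandermonde v 1 n) : Q.IsDiag := by
  obtain ⟨m, rfl⟩ : ∃ m, n = m + 1 := ⟨n - 1, by omega⟩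
  have hdm : d ≤ m := by omega
  set W := vandermonde v
  have hW : IsUnit W := (isUnit_iff_isUnit_det W).mpr
    (isUnit_iff_ne_zero.mpr (det_vandermonde_ne_zero_iff.mpr hv))
  have hWH : IsUnit Wᴴ := (isUnit_conjTranspose W).mpr hW
  have h₀ : (rectVandermonde v 1 (m + 1)).submatrix id
      (fun j => (Fin.castLE hdm j).castSucc) = W := by
    ext; simp [W]
  have h₁ : (rectVandermonde v 1 (m + 1)).submatrix id
      (fun j => (Fin.castLE hdm j).succ) = diagonal v * W := by
    ext; simp [W, pow_succ']
  have hshift : T.submatrix (fun j : Fin d => (Fin.castLE hdm j).succ)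
      (fun j => (Fin.castLE hdm j).succ) =
      T.submatrix (fun j => (Fin.castLE hdm j).castSucc)
      (fun j => (Fin.castLE hdm j).castSucc) := by
    ext; exact hT.apply_succ_succ _ _
  rw [hTQ, conjTranspose_mul_mul_submatrix, conjTranspose_mul_mul_submatrix, h₀, h₁,
    conjTranspose_mul, diagonal_conjTranspose] at hshift
  have hQ : diagonal (star v) * Q * diagonal v = Q := by
    refine hW.mul_right_cancel (hWH.mul_left_cancel ?_)
    simpa only [Matrix.mul_assoc] using hshift
  intro a b hab
  have hab' := congrFun (congrFun hQ a) b
  simp only [diagonal_mul, mul_diagonal, Pi.star_apply] at hab'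
  have hne : star (v a) * v b ≠ 1 := fun h =>
    hab (hv (mul_left_cancel₀ (left_ne_zero_of_mul_eq_one (hv1 a)) (h.trans (hv1 a).symm))).symm
  refine (mul_eq_zero.mp (?_ : (star (v a) * v b - 1) * Q a b = 0)).resolve_left
    (sub_ne_zero.mpr hne)
  linear_combination hab'

theorem PosSemidef.exists_pos_eq_diagonal {𝕜 : Type*} [RCLike 𝕜] {m : Type*} [Fintype m]
    [DecidableEq m] {Q : Matrix m m 𝕜} (hQ : Q.PosSemidef) (hdiag : Q.IsDiag)
    (hrank : Fintype.card m ≤ Q.rank) :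
    ∃ p : m → ℝ, (∀ a, 0 < p a) ∧ Q = diagonal fun a => (p a : 𝕜) := by
  classical
  have hne (a : m) : Q a a ≠ 0 := fun ha => by
    have := Fintype.card_subtype_lt (p := fun b => Q.diag b ≠ 0) (x := a) (by simpa using ha)
    rw [← rank_diagonal, hdiag.diagonal_diag] at this
    omega
  have hpos (a : m) : ∃ x : ℝ, 0 < x ∧ (x : 𝕜) = Q a a :=
    RCLike.pos_iff_exists_ofReal.mp (hQ.diag_nonneg.lt_of_ne (hne a).symm)
  choose p hp hpQ using hpos
  refine ⟨p, hp, ?_⟩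
  conv_lhs => rw [← hdiag.diagonal_diag]
  simp [diag, hpQ]

theorem conjTranspose_mul_diagonal_mul {R : Type*} [CommSemiring R] [StarRing R] {m n : Type*}
    [Fintype m] [DecidableEq m] (V : Matrix m n R) (w : m → R) :
    Vᴴ * diagonal w * V = ∑ a, w a • vecMulVec (star (V a)) (V a) := by
  ext i j
  rw [mul_apply, sum_apply]
  simp only [mul_diagonal, conjTranspose_apply, smul_apply, vecMulVec_apply, Pi.star_apply,
    smul_eq_mul]
  exact Finset.sum_congr rfl fun a _ => by ring

theorem exists_eq_sum_vecMulVec_of_ker_eq {𝕜 : Type*} [RCLike 𝕜] {T : Matrix (Fin n) (Fin n) 𝕜}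
    (hT : T.IsToeplitz) (hPSD : T.PosSemidef) {d : ℕ} {v : Fin d → 𝕜} (hv : Function.Injective v)
    (hv1 : ∀ a, ‖v a‖ = 1) (hdn : d < n)
    (hker : LinearMap.ker T.mulVecLin = LinearMap.ker (rectVandermonde v 1 n).mulVecLin) :
    ∃ p : Fin d → ℝ, (∀ a, 0 < p a) ∧ T = ∑ a, (p a : 𝕜) •
      vecMulVec (star (rectVandermonde v 1 n a)) (rectVandermonde v 1 n a) := by
  classical
  set V := rectVandermonde v 1 n
  obtain ⟨R, hVR⟩ :=
    mulVec_surjective_iff_exists_right_inverse.mp (rectVandermonde_one_mulVec_surjective hv hdn.le)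
  have hTQ : T = Vᴴ * (Rᴴ * T * R) * V := eq_conjTranspose_mul_mul_of_ker_le hPSD.1 hVR hker.ge
  have hdiag : (Rᴴ * T * R).IsDiag := hT.isDiag_of_eq_conjTranspose_mul_mul hv
    (fun a => by rw [RCLike.star_def, RCLike.conj_mul, hv1 a]; norm_num) hdn hTQ
  have hrank : Fintype.card (Fin d) ≤ (Rᴴ * T * R).rank := calc
    Fintype.card (Fin d) = T.rank := by
      rw [rank_eq_rank_of_ker_eq hker, rank_rectVandermonde_one hv hdn.le, Fintype.card_fin]
    _ ≤ (Rᴴ * T * R).rank := by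
      conv_lhs => rw [hTQ]
      exact (rank_mul_le_left _ _).trans (rank_mul_le_right _ _)
  obtain ⟨p, hp, hQ⟩ := (hPSD.conjTranspose_mul_mul_same R).exists_pos_eq_diagonal hdiag hrank
  exact ⟨p, hp, by rw [hTQ, hQ, conjTranspose_mul_diagonal_mul]⟩

end Matrix

open Complex in
theorem Complex.exists_mem_Ico_exp_mul_I_eq {z : ℂ} (hz : ‖z‖ = 1) :
    ∃ θ ∈ Set.Ico 0 (2 * Real.pi), exp (θ * I) = z := by
  refine ⟨toIcoMod Real.two_pi_pos 0 z.arg, toIcoMod_mem_Ico' _ _, ?_⟩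
  conv_rhs => rw [← norm_mul_exp_arg_mul_I z, hz, ofReal_one, one_mul]
  refine exp_eq_exp_iff_exists_int.mpr ⟨-toIcoDiv Real.two_pi_pos 0 z.arg, ?_⟩
  rw [toIcoMod, zsmul_eq_mul]
  push_cast
  ring

open Complex in
theorem star_steer (n : ℕ) (θ : ℝ) :
    star (steer n θ) = fun j : Fin n => exp (θ * I) ^ (j : ℕ) := by
  funext j
  rw [Pi.star_apply, steer, Complex.star_def, ← exp_conj, ← exp_nat_mul]
  congr 1
  simp only [map_mul, map_neg, conj_I, conj_ofReal, map_natCast]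
  ring

theorem vandermonde_decomposition_general
    (n : ℕ)
    (T : Matrix (Fin n) (Fin n) ℂ)
    (hToep : ∀ j k j' k' : Fin n,
      ((j : ℕ) : ℤ) - ((k : ℕ) : ℤ) = ((j' : ℕ) : ℤ) - ((k' : ℕ) : ℤ) → T j k = T j' k')
    (hPSD : T.PosSemidef)
    (r : ℕ) (hr : r = T.rank) (hrn : r ≤ n - 1) :
    ∃ (ω : Fin r → ℝ) (p : Fin r → ℝ),
      Function.Injective ω ∧ (∀ k, ω k ∈ Set.Ico (0 : ℝ) (2 * Real.pi)) ∧
      (∀ k, 0 < p k) ∧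
      T = ∑ k, (p k : ℂ) • Matrix.vecMulVec (steer n (ω k)) (star (steer n (ω k))) := by
  rcases Nat.eq_zero_or_pos n with rfl | hn
  · obtain rfl : r = 0 := by omega
    exact ⟨finZeroElim, finZeroElim, Function.injective_of_subsingleton _, finZeroElim,
      finZeroElim, Subsingleton.elim _ _⟩
  have hker : LinearMap.ker T.mulVecLin ≠ ⊥ := fun h => by
    have := LinearMap.finrank_range_add_finrank_ker T.mulVecLin
    rw [h, finrank_bot, Module.finrank_fin_fun, ← rank] at this
    omega
  obtain ⟨d, v, hv, hv1, hdn, hkerV⟩ := exists_ker_mulVecLin_eq_ker_rectVandermonde hToep hPSD hker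
  obtain rfl : d = r := by rw [hr, rank_eq_rank_of_ker_eq hkerV, rank_rectVandermonde_one hv hdn.le]
  obtain ⟨p, hp, hTp⟩ := exists_eq_sum_vecMulVec_of_ker_eq hToep hPSD hv hv1 hdn hkerV
  choose ω hω hωv using fun a => Complex.exists_mem_Ico_exp_mul_I_eq (hv1 a)
  have hrow (a : Fin d) : rectVandermonde v 1 n a = star (steer n (ω a)) := by
    rw [star_steer, hωv a]
    ext j
    simp
  refine ⟨ω, p, fun a b h => hv (by rw [← hωv a, ← hωv b, h]), hω, hp, ?_⟩
  simpa only [hrow, star_star, RCLike.ofReal_eq_complex_ofReal] using hTp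

/-- **Carathéodory–Fejér / Vandermonde decomposition.**
Every `n×n` Hermitian positive semidefinite Toeplitz matrix of rank `r ≤ n − 1`
decomposes as `T = Σ_{k=1}^r p_k a_n(ω_k) a_n(ω_k)ᴴ` with pairwise distinct
`ω_k ∈ [0, 2π)` and strictly positive weights `p_k`. -/
theorem vandermonde_decomposition
    (n : ℕ) (hn : 2 ≤ n)
    (T : Matrix (Fin n) (Fin n) ℂ)
    (hToep : ∀ j k j' k' : Fin n,
      ((j : ℕ) : ℤ) - ((k : ℕ) : ℤ) = ((j' : ℕ) : ℤ) - ((k' : ℕ) : ℤ) → T j k = T j' k')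
    (hPSD : T.PosSemidef)
    (r : ℕ) (hr : r = T.rank) (hrn : r ≤ n - 1) :
    ∃ (ω : Fin r → ℝ) (p : Fin r → ℝ),
      Function.Injective ω ∧ (∀ k, ω k ∈ Set.Ico (0 : ℝ) (2 * Real.pi)) ∧
      (∀ k, 0 < p k) ∧
      T = ∑ k, (p k : ℂ) • Matrix.vecMulVec (steer n (ω k)) (star (steer n (ω k))) :=
  vandermonde_decomposition_general n T hToep hPSD r hr hrn
end

section
/- Let s, n ≥ 1, let ω_1, …, ω_s ∈ ℝ, let c_1, …, c_s be nonnegative real numbers, and set x = Σ_{k=1}^s c_k a_n(ω_k) ∈ ℂ^n, u_j = Σ_{k=1}^s c_k e^{−i ω_k j} for j = 0, …, n−1, and t = Σ_{k=1}^s c_k. Let T(u) be the Hermitian Toeplitz matrix generated by u, namely T(u)_{jk} = u_{j−k} if j ≥ k and T(u)_{jk} = conj(u_{k−j}) if j < k. Then the (n+1)×(n+1) block matrix [[T(u), x],[xᴴ, t]] is positive semidefinite. -/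
open Matrix
open scoped ComplexOrder

/-- Hermitian Toeplitz matrix generated by `u`: `T(u)_{jk} = u_{j−k}` for `j ≥ k`
and `T(u)_{jk} = conj (u_{k−j})` for `j < k`. -/
noncomputable def toepGen (n : ℕ) (u : Fin n → ℂ) : Matrix (Fin n) (Fin n) ℂ :=
  Matrix.of fun j k : Fin n =>
    if (k : ℕ) ≤ (j : ℕ) then
      u ⟨(j : ℕ) - (k : ℕ), Nat.lt_of_le_of_lt (Nat.sub_le _ _) j.isLt⟩
    else star (u ⟨(k : ℕ) - (j : ℕ), Nat.lt_of_le_of_lt (Nat.sub_le _ _) k.isLt⟩)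

/-- The `(n+1)×(n+1)` block matrix `[[T(u), x], [xᴴ, t]]`. -/
noncomputable def blockZ (n : ℕ) (u x : Fin n → ℂ) (t : ℝ) :
    Matrix (Fin n ⊕ Unit) (Fin n ⊕ Unit) ℂ :=
  Matrix.fromBlocks (toepGen n u) (Matrix.of fun i _ => x i)
    (Matrix.of fun _ j => star (x j)) (Matrix.of fun _ _ => (t : ℂ))

/-!
With `v_k = (a_n(ω_k), 1) ∈ ℂ^{n+1}`, the rank-one matrix `v_k v_kᴴ` is exactly the block matrix
built from `u = x = a_n(ω_k)` and `t = 1`, because `a_n(ω) a_n(ω)ᴴ` is the Toeplitz matrix generated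
by `a_n(ω)`. The block matrix depends ℝ-linearly on `(u, x, t)`, so for an atomic decomposition it
equals `Σ_k c_k v_k v_kᴴ`, a nonnegative combination of positive semidefinite matrices.
-/

lemma star_steer_s13 (n : ℕ) (ω : ℝ) (j : Fin n) :
    star (steer n ω j) = Complex.exp (Complex.I * ω * (j : ℕ)) := by
  simp [steer, ← Complex.exp_conj]

lemma toepGen_steer (n : ℕ) (ω : ℝ) :
    toepGen n (steer n ω) = vecMulVec (steer n ω) (star (steer n ω)) := by
  ext j k
  simp only [toepGen, of_apply, vecMulVec_apply, Pi.star_apply, star_steer_s13]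
  simp only [steer, ← Complex.exp_add]
  split_ifs with hkj
  · push_cast [hkj]
    congr 1; ring
  · push_cast [(not_le.1 hkj).le]
    congr 1; ring

lemma blockZ_steer (n : ℕ) (ω : ℝ) :
    blockZ n (steer n ω) (steer n ω) 1 =
      vecMulVec (Sum.elim (steer n ω) 1) (star (Sum.elim (steer n ω) 1)) := by
  ext (i | i) (j | j) <;> simp [blockZ, toepGen_steer, vecMulVec_apply]

lemma toepGen_sum_smul {ι : Type*} [Fintype ι] (n : ℕ) (c : ι → ℝ) (u : ι → Fin n → ℂ) :
    toepGen n (∑ k, c k • u k) = ∑ k, c k • toepGen n (u k) := by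
  ext j k
  simp only [toepGen, of_apply, Matrix.sum_apply, Finset.sum_apply, Matrix.smul_apply,
    Pi.smul_apply]
  split_ifs <;> simp [star_sum]

lemma blockZ_sum_smul {ι : Type*} [Fintype ι] (n : ℕ) (c : ι → ℝ) (u x : ι → Fin n → ℂ)
    (t : ι → ℝ) :
    blockZ n (∑ k, c k • u k) (∑ k, c k • x k) (∑ k, c k * t k) =
      ∑ k, c k • blockZ n (u k) (x k) (t k) := by
  ext (i | i) (j | j) <;> simp [blockZ, toepGen_sum_smul, Matrix.sum_apply, star_sum]

theorem atomic_decomposition_feasible_general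
    (s n : ℕ)
    (ω : Fin s → ℝ) (c : Fin s → ℝ) (hc : ∀ k, 0 ≤ c k)
    (x : Fin n → ℂ) (hx : x = ∑ k, (c k : ℂ) • steer n (ω k))
    (u : Fin n → ℂ)
    (hu : ∀ j : Fin n, u j = ∑ k, (c k : ℂ) * Complex.exp (-Complex.I * (ω k) * ((j : ℕ) : ℝ)))
    (t : ℝ) (ht : t = ∑ k, c k) :
    (blockZ n u x t).PosSemidef := by
  have hx' : x = ∑ k, c k • steer n (ω k) := by simp [hx, Complex.coe_smul]
  have hu' : u = ∑ k, c k • steer n (ω k) := by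
    ext j
    simp [hu, steer, Finset.sum_apply, Complex.real_smul]
  have ht' : t = ∑ k, c k * 1 := by simp [ht]
  rw [hx', hu', ht', blockZ_sum_smul]
  refine posSemidef_sum _ fun k _ => ?_
  rw [blockZ_steer]
  exact (posSemidef_vecMulVec_self_star _).smul (hc k)

/-- **Feasibility of atomic decompositions in the SDP characterizing the atomic norm.**
For nonnegative weights `c_k`, with `x = Σ_k c_k a_n(ω_k)`,
`u_j = Σ_k c_k e^{−i ω_k j}` and `t = Σ_k c_k`, the block matrix
`[[T(u), x], [xᴴ, t]]` is positive semidefinite. -/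
theorem atomic_decomposition_feasible
    (s n : ℕ) (hs : 1 ≤ s) (hn : 1 ≤ n)
    (ω : Fin s → ℝ) (c : Fin s → ℝ) (hc : ∀ k, 0 ≤ c k)
    (x : Fin n → ℂ) (hx : x = ∑ k, (c k : ℂ) • steer n (ω k))
    (u : Fin n → ℂ)
    (hu : ∀ j : Fin n, u j = ∑ k, (c k : ℂ) * Complex.exp (-Complex.I * (ω k) * ((j : ℕ) : ℝ)))
    (t : ℝ) (ht : t = ∑ k, c k) :
    (blockZ n u x t).PosSemidef :=
  atomic_decomposition_feasible_general s n ω c hc x hx u hu t ht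
end
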